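/- Let f ∈ L_p[0,1] (1 ≤ p < ∞) be self-similar of zero spectral order with singular point x̂ = α_{k̂}/(1−a_{k̂}). Then f agrees almost everywhere with a function g on [0,1] such that: (i) g takes at most countably many values and is constant on each member of a countable family of intervals whose union is [0,1]∖{x̂}; (ii) at every point x ≠ x̂ the finite one-sided limits g(x−0) and g(x+0) exist, so every discontinuity of g other than possibly x̂ is a jump discontinuity; (iii) the set of discontinuity points of g is at most countable. -/

import Mathlib

open MeasureTheory Set Filter
open scoped ENNReal NNReal

/-- Breakpoints: `alphaOf a k = α_k = ∑_{i=1}^{k-1} a_i`, so `α_1 = 0`. -/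
noncomputable def alphaOf (a : ℕ → ℝ) (k : ℕ) : ℝ := ∑ i ∈ Finset.Ico 1 k, a i

/-- The similarity operator `G`: on `(α_k, α_{k+1})` it takes the value
`β_k + d_k · f((x − α_k)/a_k)`, and `0` outside `⋃ (α_k, α_{k+1})`. -/
noncomputable def simOp (n : ℕ) (a d β : ℕ → ℝ) (f : ℝ → ℝ) : ℝ → ℝ :=
  fun x => ∑ k ∈ Finset.Icc 1 n,
    Set.indicator (Set.Ioo (alphaOf a k) (alphaOf a (k + 1)))
      (fun y => β k + d k * f ((y - alphaOf a k) / a k)) x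

/-!
The `k̂`-th branch `φ y = α_k̂ + a_k̂ y` contracts `[0,1]` onto `[α_k̂, α_{k̂+1}]` and has
fixed point `x̂`. As `d_k = 0` for `k ≠ k̂`, the equation `G f = f` says that `f = β_k` a.e.
on `(α_k, α_{k+1})` for `k ≠ k̂`, while on `(α_k̂, α_{k̂+1})` it says `f ∘ φ = β_k̂ + d_k̂ f`.
By induction `f` is a.e. constant on every cell `φ^m (α_k, α_{k+1})`, `k ≠ k̂`. These open
cells are pairwise disjoint and tile `[0,1]` up to their endpoints and `x̂`, even one-sidedly:
pulling `x ≠ x̂` back along `φ⁻¹` until it leaves `φ [0,1]` lands it in a piece `k ≠ k̂`.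
Hence `f` agrees a.e. with the step function taking the value of `f` on each cell, which can
fail to be locally constant only at `x̂` and at the countably many cell endpoints.
-/

open Function Topology

section StepFunction

variable {ι X β : Type*}

open Classical in
noncomputable def piecewiseConst [Zero β] (I : ι → Set X) (c : ι → β) (x : X) : β :=
  if h : ∃ i, x ∈ I i then c h.choose else 0

variable [Zero β] {I : ι → Set X} {c : ι → β} {i : ι} {x : X}

theorem piecewiseConst_eq_of_mem (hI : Pairwise (Disjoint on I)) (hx : x ∈ I i) :
    piecewiseConst I c x = c i := by
  have h : ∃ j, x ∈ I j := ⟨i, hx⟩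
  have hchoose : h.choose = i := by
    by_contra hne
    exact disjoint_left.mp (hI hne) h.choose_spec hx
  rw [piecewiseConst, dif_pos h, hchoose]

theorem piecewiseConst_mem_insert_range (x : X) :
    piecewiseConst I c x ∈ insert 0 (range c) := by
  unfold piecewiseConst
  split_ifs
  exacts [mem_insert_of_mem _ (mem_range_self _), mem_insert _ _]

theorem continuousAt_piecewiseConst [TopologicalSpace X] [TopologicalSpace β]
    (hI : Pairwise (Disjoint on I)) (hopen : IsOpen (I i)) (hx : x ∈ I i) :
    ContinuousAt (piecewiseConst I c) x :=
  continuousAt_const.congr <| eventuallyEq_of_mem (hopen.mem_nhds hx) fun _ hy =>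
    (piecewiseConst_eq_of_mem hI hy).symm

end StepFunction

section IntervalStepFunction

variable {ι : Type*} {l r c : ι → ℝ} {u v x₀ : ℝ}

theorem tendsto_piecewiseConst_nhdsLT {i : ι} {x : ℝ}
    (hI : Pairwise (Disjoint on fun i => Ioo (l i) (r i))) (hx : x ∈ Ioc (l i) (r i)) :
    Tendsto (piecewiseConst (fun i => Ioo (l i) (r i)) c) (𝓝[<] x) (𝓝 (c i)) :=
  tendsto_const_nhds.congr' <| eventuallyEq_of_mem (Ioo_mem_nhdsLT hx.1) fun _ hy =>
    (piecewiseConst_eq_of_mem hI ⟨hy.1, hy.2.trans_le hx.2⟩).symm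

theorem tendsto_piecewiseConst_nhdsGT {i : ι} {x : ℝ}
    (hI : Pairwise (Disjoint on fun i => Ioo (l i) (r i))) (hx : x ∈ Ico (l i) (r i)) :
    Tendsto (piecewiseConst (fun i => Ioo (l i) (r i)) c) (𝓝[>] x) (𝓝 (c i)) :=
  tendsto_const_nhds.congr' <| eventuallyEq_of_mem (Ioo_mem_nhdsGT hx.2) fun _ hy =>
    (piecewiseConst_eq_of_mem hI ⟨hx.1.trans_lt hy.1, hy.2⟩).symm

theorem diff_iUnion_Ioo_subset_range_union_range (huv : u < v)
    (hleft : ∀ x ∈ Ioc u v, x ≠ x₀ → ∃ i, x ∈ Ioc (l i) (r i))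
    (hright : ∀ x ∈ Ico u v, x ≠ x₀ → ∃ i, x ∈ Ico (l i) (r i)) :
    (Icc u v \ {x₀}) \ (⋃ i, Ioo (l i) (r i)) ⊆ range l ∪ range r := by
  rintro x ⟨⟨hx, hx₀⟩, hxI⟩
  simp only [mem_iUnion, not_exists] at hxI
  rcases hx.1.eq_or_lt with rfl | hux
  · obtain ⟨i, hi⟩ := hright u ⟨le_rfl, huv⟩ hx₀
    exact Or.inl ⟨i, hi.1.eq_of_not_lt fun h => hxI i ⟨h, hi.2⟩⟩
  · obtain ⟨i, hi⟩ := hleft x ⟨hux, hx.2⟩ hx₀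
    exact Or.inr ⟨i, (hi.2.eq_of_not_lt fun h => hxI i ⟨hi.1, h⟩).symm⟩

theorem ae_restrict_eq_piecewiseConst [Countable ι] {f : ℝ → ℝ}
    (hI : Pairwise (Disjoint on fun i => Ioo (l i) (r i)))
    (hE : ((Icc u v \ {x₀}) \ ⋃ i, Ioo (l i) (r i)).Countable)
    (hf : ∀ i, ∀ᵐ x, x ∈ Ioo (l i) (r i) → f x = c i) :
    f =ᵐ[volume.restrict (Icc u v)] piecewiseConst (fun i => Ioo (l i) (r i)) c := by
  rw [EventuallyEq, ae_restrict_iff' measurableSet_Icc]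
  filter_upwards [ae_all_iff.2 hf, (hE.insert x₀).ae_notMem volume] with x hfx hxE hx
  rcases eq_or_ne x x₀ with rfl | hx₀
  · exact absurd (mem_insert x _) hxE
  by_cases hcell : ∃ i, x ∈ Ioo (l i) (r i)
  · obtain ⟨i, hi⟩ := hcell
    rw [hfx i hi, piecewiseConst_eq_of_mem hI hi]
  · exact (hxE (mem_insert_of_mem x₀ ⟨⟨hx, hx₀⟩, by simpa using hcell⟩)).elim

theorem exists_countable_ordConnected_cover_piecewiseConst [Countable ι]
    (hI : Pairwise (Disjoint on fun i => Ioo (l i) (r i)))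
    (hsub : ∀ i, Ioo (l i) (r i) ⊆ Icc u v \ {x₀})
    (hE : ((Icc u v \ {x₀}) \ ⋃ i, Ioo (l i) (r i)).Countable) :
    ∃ 𝒥 : Set (Set ℝ), 𝒥.Countable ∧ (∀ I ∈ 𝒥, I.OrdConnected) ∧
      ⋃₀ 𝒥 = Icc u v \ {x₀} ∧
      ∀ I ∈ 𝒥, ∀ x ∈ I, ∀ y ∈ I,
        piecewiseConst (fun i => Ioo (l i) (r i)) c x =
          piecewiseConst (fun i => Ioo (l i) (r i)) c y := by
  refine ⟨range (fun i => Ioo (l i) (r i)) ∪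
    (fun x => {x}) '' ((Icc u v \ {x₀}) \ ⋃ i, Ioo (l i) (r i)),
    (countable_range _).union (hE.image _), ?_, ?_, ?_⟩
  · rintro _ (⟨i, rfl⟩ | ⟨x, -, rfl⟩)
    exacts [ordConnected_Ioo, ordConnected_singleton]
  · rw [sUnion_union, sUnion_range, sUnion_image, biUnion_of_singleton,
      union_sdiff_cancel (iUnion_subset hsub)]
  · rintro _ (⟨i, rfl⟩ | ⟨z, -, rfl⟩) x hx y hy
    · rw [piecewiseConst_eq_of_mem hI hx, piecewiseConst_eq_of_mem hI hy]
    · rw [mem_singleton_iff.1 hx, mem_singleton_iff.1 hy]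

theorem exists_tendsto_piecewiseConst_nhdsWithin_Iio
    (hI : Pairwise (Disjoint on fun i => Ioo (l i) (r i)))
    (hleft : ∀ x ∈ Ioc u v, x ≠ x₀ → ∃ i, x ∈ Ioc (l i) (r i))
    {x : ℝ} (hx : x ∈ Icc u v) (hx₀ : x ≠ x₀) :
    ∃ L, Tendsto (piecewiseConst (fun i => Ioo (l i) (r i)) c)
      (𝓝[Icc u v ∩ Iio x] x) (𝓝 L) := by
  rcases hx.1.eq_or_lt with rfl | hux
  · have hempty : Icc u v ∩ Iio u = ∅ :=
      eq_empty_of_forall_notMem fun y hy => hy.2.not_ge hy.1.1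
    exact ⟨0, by simp [hempty]⟩
  · obtain ⟨i, hi⟩ := hleft x ⟨hux, hx.2⟩ hx₀
    exact ⟨c i, (tendsto_piecewiseConst_nhdsLT hI hi).mono_left
      (nhdsWithin_mono _ inter_subset_right)⟩

theorem exists_tendsto_piecewiseConst_nhdsWithin_Ioi
    (hI : Pairwise (Disjoint on fun i => Ioo (l i) (r i)))
    (hright : ∀ x ∈ Ico u v, x ≠ x₀ → ∃ i, x ∈ Ico (l i) (r i))
    {x : ℝ} (hx : x ∈ Icc u v) (hx₀ : x ≠ x₀) :
    ∃ L, Tendsto (piecewiseConst (fun i => Ioo (l i) (r i)) c)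
      (𝓝[Icc u v ∩ Ioi x] x) (𝓝 L) := by
  rcases hx.2.eq_or_lt with rfl | hxv
  · have hempty : Icc u x ∩ Ioi x = ∅ :=
      eq_empty_of_forall_notMem fun y hy => hy.2.not_ge hy.1.2
    exact ⟨0, by simp [hempty]⟩
  · obtain ⟨i, hi⟩ := hright x ⟨hx.1, hxv⟩ hx₀
    exact ⟨c i, (tendsto_piecewiseConst_nhdsGT hI hi).mono_left
      (nhdsWithin_mono _ inter_subset_right)⟩

theorem setOf_not_continuousWithinAt_piecewiseConst_subset
    (hI : Pairwise (Disjoint on fun i => Ioo (l i) (r i))) :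
    {x ∈ Icc u v | ¬ ContinuousWithinAt (piecewiseConst (fun i => Ioo (l i) (r i)) c)
      (Icc u v) x} ⊆ insert x₀ ((Icc u v \ {x₀}) \ ⋃ i, Ioo (l i) (r i)) := by
  rintro x ⟨hx, hdisc⟩
  rcases eq_or_ne x x₀ with rfl | hx₀
  · exact mem_insert x _
  by_cases hcell : ∃ i, x ∈ Ioo (l i) (r i)
  · obtain ⟨i, hi⟩ := hcell
    exact absurd (continuousAt_piecewiseConst hI isOpen_Ioo hi).continuousWithinAt hdisc
  · exact mem_insert_of_mem x₀ ⟨⟨hx, hx₀⟩, by simpa using hcell⟩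

theorem exists_ae_eq_stepFunction [Countable ι] {f : ℝ → ℝ} (huv : u < v)
    (hI : Pairwise (Disjoint on fun i => Ioo (l i) (r i)))
    (hsub : ∀ i, Ioo (l i) (r i) ⊆ Icc u v \ {x₀})
    (hleft : ∀ x ∈ Ioc u v, x ≠ x₀ → ∃ i, x ∈ Ioc (l i) (r i))
    (hright : ∀ x ∈ Ico u v, x ≠ x₀ → ∃ i, x ∈ Ico (l i) (r i))
    (hf : ∀ i, ∀ᵐ x, x ∈ Ioo (l i) (r i) → f x = c i) :
    ∃ g : ℝ → ℝ,
      f =ᵐ[volume.restrict (Icc u v)] g ∧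
      (g '' Icc u v).Countable ∧
      (∃ 𝒥 : Set (Set ℝ), 𝒥.Countable ∧
        (∀ I ∈ 𝒥, I.OrdConnected) ∧
        ⋃₀ 𝒥 = Icc u v \ {x₀} ∧
        (∀ I ∈ 𝒥, ∀ x ∈ I, ∀ y ∈ I, g x = g y)) ∧
      (∀ x ∈ Icc u v, x ≠ x₀ →
        (∃ L : ℝ, Tendsto g (𝓝[Icc u v ∩ Iio x] x) (𝓝 L)) ∧
        (∃ L : ℝ, Tendsto g (𝓝[Icc u v ∩ Ioi x] x) (𝓝 L))) ∧
      {x ∈ Icc u v | ¬ ContinuousWithinAt g (Icc u v) x}.Countable := by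
  have hE : ((Icc u v \ {x₀}) \ ⋃ i, Ioo (l i) (r i)).Countable :=
    ((countable_range l).union (countable_range r)).mono
      (diff_iUnion_Ioo_subset_range_union_range huv hleft hright)
  refine ⟨piecewiseConst (fun i => Ioo (l i) (r i)) c, ae_restrict_eq_piecewiseConst hI hE hf,
    ((countable_range c).insert 0).mono
      (image_subset_iff.2 fun x _ => piecewiseConst_mem_insert_range x),
    exists_countable_ordConnected_cover_piecewiseConst hI hsub hE,
    fun x hx hx₀ => ⟨exists_tendsto_piecewiseConst_nhdsWithin_Iio hI hleft hx hx₀,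
      exists_tendsto_piecewiseConst_nhdsWithin_Ioi hI hright hx hx₀⟩,
    (hE.insert x₀).mono (setOf_not_continuousWithinAt_piecewiseConst_subset hI)⟩

end IntervalStepFunction

section Iterate

variable {X : Type*}

theorem exists_iterate_eq_of_mem_diff_image {φ : X → X} {s : Set X} {x : X} (hx : x ∈ s)
    (hesc : ∃ m, x ∉ φ^[m] '' s) : ∃ m, ∃ y ∈ s \ φ '' s, φ^[m] y = x := by
  classical
  obtain ⟨t, ht⟩ : ∃ t, Nat.find hesc = t + 1 :=
    Nat.exists_eq_add_one_of_ne_zero fun h0 => Nat.find_spec hesc (by rw [h0]; simpa using hx)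
  obtain ⟨y, hy, rfl⟩ := not_not.1 (Nat.find_min hesc (show t < Nat.find hesc by omega))
  refine ⟨t, y, ⟨hy, ?_⟩, rfl⟩
  rintro ⟨z, hz, rfl⟩
  have hspec := Nat.find_spec hesc
  rw [ht] at hspec
  exact hspec ⟨z, hz, iterate_succ_apply φ t z⟩

theorem dist_iterate_le_of_dist_le [PseudoMetricSpace X] {φ : X → X} {c : X} {q : ℝ}
    (hq : 0 ≤ q) (hφ : ∀ y, dist (φ y) c ≤ q * dist y c) (m : ℕ) (y : X) :
    dist (φ^[m] y) c ≤ q ^ m * dist y c := by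
  induction m with
  | zero => simp
  | succ m ih =>
    rw [iterate_succ_apply', pow_succ', mul_assoc]
    exact (hφ _).trans (mul_le_mul_of_nonneg_left ih hq)

theorem exists_notMem_image_iterate [MetricSpace X] {φ : X → X} {c x : X} {q : ℝ} {s : Set X}
    (hq₀ : 0 ≤ q) (hq₁ : q < 1) (hφ : ∀ y, dist (φ y) c ≤ q * dist y c)
    (hs : Bornology.IsBounded s) (hx : x ≠ c) : ∃ m, x ∉ φ^[m] '' s := by
  obtain ⟨R, hR⟩ := hs.subset_closedBall c
  have hlim : Tendsto (fun m => q ^ m * R) atTop (𝓝 0) := by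
    simpa using (tendsto_pow_atTop_nhds_zero_of_lt_one hq₀ hq₁).mul_const R
  obtain ⟨m, hm⟩ := (hlim.eventually (gt_mem_nhds (dist_pos.2 hx))).exists
  refine ⟨m, ?_⟩
  rintro ⟨y, hy, rfl⟩
  exact ((dist_iterate_le_of_dist_le hq₀ hφ m y).trans
    (mul_le_mul_of_nonneg_left (hR hy) (pow_nonneg hq₀ m))).not_gt hm

end Iterate

theorem quasiMeasurePreserving_sub_div (b : ℝ) {r : ℝ} (hr : r ≠ 0) :
    Measure.QuasiMeasurePreserving (fun x : ℝ => (x - b) / r) volume volume := by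
  convert (Measure.quasiMeasurePreserving_smul volume (inv_ne_zero hr)).comp
    (quasiMeasurePreserving_add_right volume (-b)) using 1
  funext x
  simp [div_eq_inv_mul, sub_eq_add_neg]

section Breakpoints

variable {n : ℕ} {a : ℕ → ℝ}

theorem alphaOf_one (a : ℕ → ℝ) : alphaOf a 1 = 0 := by
  simp [alphaOf]

theorem alphaOf_succ (a : ℕ → ℝ) {k : ℕ} (hk : 1 ≤ k) :
    alphaOf a (k + 1) = alphaOf a k + a k :=
  Finset.sum_Ico_succ_top hk a

theorem alphaOf_add_one (a : ℕ → ℝ) (n : ℕ) :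
    alphaOf a (n + 1) = ∑ k ∈ Finset.Icc 1 n, a k := by
  rw [alphaOf, Finset.Ico_add_one_right_eq_Icc]

theorem alphaOf_le_alphaOf (ha : ∀ k ∈ Finset.Icc 1 n, 0 ≤ a k) {i j : ℕ} (hij : i ≤ j)
    (hj : j ≤ n + 1) : alphaOf a i ≤ alphaOf a j :=
  Finset.sum_le_sum_of_subset_of_nonneg (Finset.Ico_subset_Ico le_rfl hij) fun t ht _ =>
    ha t (by simp only [Finset.mem_Ico, Finset.mem_Icc] at ht ⊢; omega)

theorem disjoint_Ioo_Icc_alphaOf (ha : ∀ k ∈ Finset.Icc 1 n, 0 ≤ a k) {k j : ℕ}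
    (hk : k ∈ Finset.Icc 1 n) (hj : j ∈ Finset.Icc 1 n) (hkj : k ≠ j) :
    Disjoint (Ioo (alphaOf a k) (alphaOf a (k + 1))) (Icc (alphaOf a j) (alphaOf a (j + 1))) := by
  rw [Finset.mem_Icc] at hk hj
  refine disjoint_left.2 fun x hxk hxj => ?_
  rcases hkj.lt_or_gt with h | h
  · linarith [hxk.2, hxj.1, alphaOf_le_alphaOf ha (show k + 1 ≤ j by omega) (by omega)]
  · linarith [hxk.1, hxj.2, alphaOf_le_alphaOf ha (show j + 1 ≤ k by omega) (by omega)]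

theorem alphaOf_mem_Icc (ha : ∀ k ∈ Finset.Icc 1 n, 0 ≤ a k)
    (hsum : ∑ k ∈ Finset.Icc 1 n, a k = 1) {k : ℕ} (h₁ : 1 ≤ k) (hk : k ≤ n + 1) :
    alphaOf a k ∈ Icc 0 1 :=
  ⟨alphaOf_one a ▸ alphaOf_le_alphaOf ha h₁ hk,
    hsum ▸ alphaOf_add_one a n ▸ alphaOf_le_alphaOf ha hk le_rfl⟩

theorem Ioo_alphaOf_subset_Ioo (ha : ∀ k ∈ Finset.Icc 1 n, 0 ≤ a k)
    (hsum : ∑ k ∈ Finset.Icc 1 n, a k = 1) {k : ℕ} (hk : k ∈ Finset.Icc 1 n) :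
    Ioo (alphaOf a k) (alphaOf a (k + 1)) ⊆ Ioo 0 1 := by
  rw [Finset.mem_Icc] at hk
  exact Ioo_subset_Ioo (alphaOf_mem_Icc ha hsum hk.1 (by omega)).1
    (alphaOf_mem_Icc ha hsum (by omega) (by omega)).2

theorem simOp_eq_of_mem_Ioo (ha : ∀ k ∈ Finset.Icc 1 n, 0 ≤ a k) (d β : ℕ → ℝ) (f : ℝ → ℝ)
    {k : ℕ} (hk : k ∈ Finset.Icc 1 n) {x : ℝ} (hx : x ∈ Ioo (alphaOf a k) (alphaOf a (k + 1))) :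
    simOp n a d β f x = β k + d k * f ((x - alphaOf a k) / a k) := by
  rw [simOp, Finset.sum_eq_single_of_mem k hk fun j hj hjk => indicator_of_notMem
    (fun hxj => disjoint_left.1 (disjoint_Ioo_Icc_alphaOf ha hj hk hjk) hxj
      (Ioo_subset_Icc_self hx)) _]
  exact indicator_of_mem hx _

theorem lt_one_of_sum_eq_one (hn : 1 < n) (ha : ∀ k ∈ Finset.Icc 1 n, 0 < a k)
    (hsum : ∑ k ∈ Finset.Icc 1 n, a k = 1) {k : ℕ} (hk : k ∈ Finset.Icc 1 n) : a k < 1 := by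
  obtain ⟨j, hj, hjk⟩ : ∃ j ∈ Finset.Icc 1 n, j ≠ k := by
    by_cases h : k = 1
    · exact ⟨2, Finset.mem_Icc.2 ⟨one_le_two, hn⟩, by omega⟩
    · exact ⟨1, Finset.mem_Icc.2 ⟨le_rfl, hn.le⟩, Ne.symm h⟩
  exact hsum ▸ Finset.single_lt_sum hjk hk hj (ha j hj) fun i hi _ => (ha i hi).le

end Breakpoints

noncomputable def branch (a : ℕ → ℝ) (k : ℕ) (y : ℝ) : ℝ := alphaOf a k + a k * y

section Branch

variable {a : ℕ → ℝ} {k : ℕ}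

theorem branch_strictMono (h : 0 < a k) : StrictMono (branch a k) := fun _ _ hxy =>
  add_lt_add_right (mul_lt_mul_of_pos_left hxy h) _

theorem continuous_branch : Continuous (branch a k) := by
  unfold branch
  fun_prop

theorem image_branch_Ioo (hk : 1 ≤ k) (h : 0 < a k) :
    branch a k '' Ioo 0 1 = Ioo (alphaOf a k) (alphaOf a (k + 1)) := by
  simp [continuous_branch.image_Ioo_of_strictMono (branch_strictMono h), branch,
    alphaOf_succ a hk]

theorem image_branch_Ioc (hk : 1 ≤ k) (h : 0 < a k) :
    branch a k '' Ioc 0 1 = Ioc (alphaOf a k) (alphaOf a (k + 1)) := by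
  simp [continuous_branch.image_Ioc_of_strictMono (branch_strictMono h), branch,
    alphaOf_succ a hk]

theorem image_branch_Ico (hk : 1 ≤ k) (h : 0 < a k) :
    branch a k '' Ico 0 1 = Ico (alphaOf a k) (alphaOf a (k + 1)) := by
  simp [continuous_branch.image_Ico_of_strictMono (branch_strictMono h), branch,
    alphaOf_succ a hk]

theorem branch_fixedPoint (h : a k ≠ 1) :
    branch a k (alphaOf a k / (1 - a k)) = alphaOf a k / (1 - a k) := by
  have : 1 - a k ≠ 0 := sub_ne_zero.2 (Ne.symm h)
  simp only [branch]
  field_simp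
  ring

theorem dist_branch_fixedPoint (h₀ : 0 ≤ a k) (h₁ : a k ≠ 1) (y : ℝ) :
    dist (branch a k y) (alphaOf a k / (1 - a k)) =
      a k * dist y (alphaOf a k / (1 - a k)) := by
  conv_lhs => rw [← branch_fixedPoint h₁]
  simp only [branch, Real.dist_eq, ← mul_sub, add_sub_add_left_eq_sub, abs_mul,
    abs_of_nonneg h₀]

theorem fixedPoint_mem_Icc (hk : 1 ≤ k) (h₀ : 0 < a k) (h₁ : a k < 1)
    (hα : 0 ≤ alphaOf a k) (hα₁ : alphaOf a (k + 1) ≤ 1) :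
    alphaOf a k / (1 - a k) ∈ Icc (alphaOf a k) (alphaOf a (k + 1)) := by
  rw [alphaOf_succ a hk] at hα₁ ⊢
  have h : 0 < 1 - a k := sub_pos.2 h₁
  constructor
  · rw [le_div_iff₀ h]; nlinarith
  · rw [div_le_iff₀ h]; nlinarith

theorem exists_iterate_branch_eq (h₀ : 0 ≤ a k) (h₁ : a k < 1) {s : Set ℝ}
    (hs : s ⊆ Icc 0 1) {x : ℝ} (hx : x ∈ s) (hxk : x ≠ alphaOf a k / (1 - a k)) :
    ∃ m, ∃ y ∈ s \ branch a k '' s, (branch a k)^[m] y = x :=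
  exists_iterate_eq_of_mem_diff_image hx <| exists_notMem_image_iterate h₀ h₁
    (fun y => (dist_branch_fixedPoint h₀ h₁.ne y).le) ((Metric.isBounded_Icc 0 1).subset hs)
    hxk

end Branch

noncomputable def cell (a : ℕ → ℝ) (khat m k : ℕ) : Set ℝ :=
  (branch a khat)^[m] '' Ioo (alphaOf a k) (alphaOf a (k + 1))

section Cell

variable {n khat : ℕ} {a : ℕ → ℝ}

theorem cell_eq_Ioo (h : 0 < a khat) (m k : ℕ) :
    cell a khat m k =
      Ioo ((branch a khat)^[m] (alphaOf a k)) ((branch a khat)^[m] (alphaOf a (k + 1))) :=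
  (continuous_branch.iterate m).image_Ioo_of_strictMono ((branch_strictMono h).iterate m)

theorem mapsTo_branch_Ioo (ha : ∀ k ∈ Finset.Icc 1 n, 0 < a k)
    (hsum : ∑ k ∈ Finset.Icc 1 n, a k = 1) (hkhat : khat ∈ Finset.Icc 1 n) :
    MapsTo (branch a khat) (Ioo 0 1) (Ioo 0 1) := by
  rw [mapsTo_iff_image_subset, image_branch_Ioo (Finset.mem_Icc.1 hkhat).1 (ha khat hkhat)]
  exact Ioo_alphaOf_subset_Ioo (fun k hk => (ha k hk).le) hsum hkhat

theorem cell_subset_Ioo (ha : ∀ k ∈ Finset.Icc 1 n, 0 < a k)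
    (hsum : ∑ k ∈ Finset.Icc 1 n, a k = 1) (hkhat : khat ∈ Finset.Icc 1 n) {k : ℕ}
    (hk : k ∈ Finset.Icc 1 n) (m : ℕ) : cell a khat m k ⊆ Ioo 0 1 :=
  ((mapsTo_branch_Ioo ha hsum hkhat).iterate m |>.mono_left
    (Ioo_alphaOf_subset_Ioo (fun k hk => (ha k hk).le) hsum hk)).image_subset

theorem fixedPoint_notMem_cell (ha : ∀ k ∈ Finset.Icc 1 n, 0 < a k)
    (hsum : ∑ k ∈ Finset.Icc 1 n, a k = 1) (hkhat : khat ∈ Finset.Icc 1 n) (hak : a khat < 1)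
    {k : ℕ} (hk : k ∈ (Finset.Icc 1 n).erase khat) (m : ℕ) :
    alphaOf a khat / (1 - a khat) ∉ cell a khat m k := by
  rintro ⟨y, hy, hyx⟩
  have hy' : y = alphaOf a khat / (1 - a khat) :=
    ((branch_strictMono (ha khat hkhat)).iterate m).injective <|
      hyx.trans (iterate_fixed (branch_fixedPoint hak.ne) m).symm
  obtain ⟨hk₁, hkn⟩ := Finset.mem_Icc.1 hkhat
  have ha' : ∀ k ∈ Finset.Icc 1 n, 0 ≤ a k := fun k hk => (ha k hk).le
  refine disjoint_left.1 (disjoint_Ioo_Icc_alphaOf ha' (Finset.mem_of_mem_erase hk) hkhat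
    (Finset.ne_of_mem_erase hk)) hy ?_
  rw [hy']
  exact fixedPoint_mem_Icc hk₁ (ha khat hkhat) hak (alphaOf_mem_Icc ha' hsum hk₁ (by omega)).1
    (alphaOf_mem_Icc ha' hsum (by omega) (by omega)).2

theorem cell_subset_Icc_diff (ha : ∀ k ∈ Finset.Icc 1 n, 0 < a k)
    (hsum : ∑ k ∈ Finset.Icc 1 n, a k = 1) (hkhat : khat ∈ Finset.Icc 1 n) (hak : a khat < 1)
    {k : ℕ} (hk : k ∈ (Finset.Icc 1 n).erase khat) (m : ℕ) :
    cell a khat m k ⊆ Icc 0 1 \ {alphaOf a khat / (1 - a khat)} := fun x hx =>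
  ⟨Ioo_subset_Icc_self (cell_subset_Ioo ha hsum hkhat (Finset.mem_of_mem_erase hk) m hx),
    by rintro rfl; exact fixedPoint_notMem_cell ha hsum hkhat hak hk m hx⟩

theorem disjoint_cell_of_le (ha : ∀ k ∈ Finset.Icc 1 n, 0 < a k)
    (hsum : ∑ k ∈ Finset.Icc 1 n, a k = 1) (hkhat : khat ∈ Finset.Icc 1 n) {m m' k k' : ℕ}
    (hk : k ∈ (Finset.Icc 1 n).erase khat) (hk' : k' ∈ (Finset.Icc 1 n).erase khat)
    (hm : m ≤ m') (hne : (m, k) ≠ (m', k')) :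
    Disjoint (cell a khat m k) (cell a khat m' k') := by
  have ha' : ∀ k ∈ Finset.Icc 1 n, 0 ≤ a k := fun k hk => (ha k hk).le
  obtain ⟨t, rfl⟩ := Nat.exists_eq_add_of_le hm
  rw [cell, cell, iterate_add, image_comp,
    disjoint_image_iff ((branch_strictMono (ha khat hkhat)).iterate m).injective]
  cases t with
  | zero =>
    rw [iterate_zero, image_id]
    exact (disjoint_Ioo_Icc_alphaOf ha' (Finset.mem_of_mem_erase hk)
      (Finset.mem_of_mem_erase hk') (by simpa using hne)).mono_right Ioo_subset_Icc_self
  | succ t =>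
    refine (disjoint_Ioo_Icc_alphaOf ha' (Finset.mem_of_mem_erase hk) hkhat
      (Finset.ne_of_mem_erase hk)).mono_right ?_
    rw [iterate_succ', image_comp]
    calc branch a khat '' cell a khat t k' ⊆ branch a khat '' Ioo 0 1 :=
          image_mono (cell_subset_Ioo ha hsum hkhat (Finset.mem_of_mem_erase hk') t)
      _ = Ioo (alphaOf a khat) (alphaOf a (khat + 1)) :=
          image_branch_Ioo (Finset.mem_Icc.1 hkhat).1 (ha khat hkhat)
      _ ⊆ _ := Ioo_subset_Icc_self

theorem pairwise_disjoint_cell (ha : ∀ k ∈ Finset.Icc 1 n, 0 < a k)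
    (hsum : ∑ k ∈ Finset.Icc 1 n, a k = 1) (hkhat : khat ∈ Finset.Icc 1 n) :
    Pairwise (Disjoint on fun i : ℕ × (Finset.Icc 1 n).erase khat => cell a khat i.1 i.2) := by
  rintro ⟨m, k, hk⟩ ⟨m', k', hk'⟩ hne
  have hne' : (m, k) ≠ (m', k') := by simpa [Subtype.ext_iff] using hne
  rcases le_total m m' with h | h
  · exact disjoint_cell_of_le ha hsum hkhat hk hk' h hne'
  · exact (disjoint_cell_of_le ha hsum hkhat hk' hk h hne'.symm).symm

theorem exists_mem_Ioc_iterate_branch (ha : ∀ k ∈ Finset.Icc 1 n, 0 < a k)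
    (hsum : ∑ k ∈ Finset.Icc 1 n, a k = 1) (hkhat : khat ∈ Finset.Icc 1 n) (hak : a khat < 1)
    {x : ℝ} (hx : x ∈ Ioc 0 1) (hxk : x ≠ alphaOf a khat / (1 - a khat)) :
    ∃ i : ℕ × (Finset.Icc 1 n).erase khat,
      x ∈ Ioc ((branch a khat)^[i.1] (alphaOf a i.2))
        ((branch a khat)^[i.1] (alphaOf a (i.2 + 1))) := by
  obtain ⟨m, y, ⟨hy, hyk⟩, rfl⟩ :=
    exists_iterate_branch_eq (ha khat hkhat).le hak Ioc_subset_Icc_self hx hxk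
  rw [image_branch_Ioc (Finset.mem_Icc.1 hkhat).1 (ha khat hkhat)] at hyk
  have hy' : y ∈ Ioc (alphaOf a (0 + 1)) (alphaOf a (n + 1)) := by
    rwa [zero_add, alphaOf_one, alphaOf_add_one, hsum]
  obtain ⟨j, hj, hyj⟩ :=
    mem_iUnion₂.1 (Ioc_subset_biUnion_Ioc n (fun j => alphaOf a (j + 1)) hy')
  have hjk : j + 1 ≠ khat := by rintro rfl; exact hyk hyj
  have hmono := (branch_strictMono (ha khat hkhat)).iterate m
  exact ⟨(m, ⟨j + 1,
    Finset.mem_erase.2 ⟨hjk, Finset.mem_Icc.2 ⟨j.succ_pos, Finset.mem_range.1 hj⟩⟩⟩),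
    hmono hyj.1, hmono.monotone hyj.2⟩

theorem exists_mem_Ico_iterate_branch (ha : ∀ k ∈ Finset.Icc 1 n, 0 < a k)
    (hsum : ∑ k ∈ Finset.Icc 1 n, a k = 1) (hkhat : khat ∈ Finset.Icc 1 n) (hak : a khat < 1)
    {x : ℝ} (hx : x ∈ Ico 0 1) (hxk : x ≠ alphaOf a khat / (1 - a khat)) :
    ∃ i : ℕ × (Finset.Icc 1 n).erase khat,
      x ∈ Ico ((branch a khat)^[i.1] (alphaOf a i.2))
        ((branch a khat)^[i.1] (alphaOf a (i.2 + 1))) := by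
  obtain ⟨m, y, ⟨hy, hyk⟩, rfl⟩ :=
    exists_iterate_branch_eq (ha khat hkhat).le hak Ico_subset_Icc_self hx hxk
  rw [image_branch_Ico (Finset.mem_Icc.1 hkhat).1 (ha khat hkhat)] at hyk
  have hy' : y ∈ Ico (alphaOf a (0 + 1)) (alphaOf a (n + 1)) := by
    rwa [zero_add, alphaOf_one, alphaOf_add_one, hsum]
  obtain ⟨j, hj, hyj⟩ :=
    mem_iUnion₂.1 (Ico_subset_biUnion_Ico n (fun j => alphaOf a (j + 1)) hy')
  have hjk : j + 1 ≠ khat := by rintro rfl; exact hyk hyj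
  have hmono := (branch_strictMono (ha khat hkhat)).iterate m
  exact ⟨(m, ⟨j + 1,
    Finset.mem_erase.2 ⟨hjk, Finset.mem_Icc.2 ⟨j.succ_pos, Finset.mem_range.1 hj⟩⟩⟩),
    hmono.monotone hyj.1, hmono hyj.2⟩

theorem ae_eq_iterate_of_mem_cell {d β : ℕ → ℝ} {f : ℝ → ℝ}
    (ha : ∀ k ∈ Finset.Icc 1 n, 0 < a k) (hsum : ∑ k ∈ Finset.Icc 1 n, a k = 1)
    (hkhat : khat ∈ Finset.Icc 1 n)
    (hd : ∀ k ∈ Finset.Icc 1 n, k ≠ khat → d k = 0)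
    (hfix : ∀ᵐ x, x ∈ Icc (0 : ℝ) 1 → f x = simOp n a d β f x)
    {k : ℕ} (hk : k ∈ (Finset.Icc 1 n).erase khat) (m : ℕ) :
    ∀ᵐ x, x ∈ cell a khat m k → f x = (fun y => β khat + d khat * y)^[m] (β k) := by
  have ha' : ∀ k ∈ Finset.Icc 1 n, 0 ≤ a k := fun k hk => (ha k hk).le
  have hk' := Finset.mem_of_mem_erase hk
  induction m with
  | zero =>
    filter_upwards [hfix] with x hfx hx
    rw [cell, iterate_zero, image_id] at hx
    rw [hfx (Ioo_subset_Icc_self (Ioo_alphaOf_subset_Ioo ha' hsum hk' hx)),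
      simOp_eq_of_mem_Ioo ha' d β f hk' hx, hd k hk' (Finset.ne_of_mem_erase hk)]
    simp
  | succ m ih =>
    filter_upwards [hfix, (quasiMeasurePreserving_sub_div (alphaOf a khat)
      (ha khat hkhat).ne').ae ih] with x hfx hψx hx
    rw [cell, iterate_succ', image_comp] at hx
    obtain ⟨y, hy, rfl⟩ := hx
    have hψ : (branch a khat y - alphaOf a khat) / a khat = y := by
      simp only [branch, add_sub_cancel_left]
      exact mul_div_cancel_left₀ y (ha khat hkhat).ne'
    have hφy : branch a khat y ∈ Ioo (alphaOf a khat) (alphaOf a (khat + 1)) :=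
      image_branch_Ioo (Finset.mem_Icc.1 hkhat).1 (ha khat hkhat) ▸
        mem_image_of_mem _ (cell_subset_Ioo ha hsum hkhat hk' m hy)
    rw [hfx (Ioo_subset_Icc_self (Ioo_alphaOf_subset_Ioo ha' hsum hkhat hφy)),
      simOp_eq_of_mem_Ioo ha' d β f hkhat hφy, hψx (hψ.symm ▸ hy), iterate_succ_apply']

end Cell

theorem selfSimilar_zeroOrder_structure_general
    (n : ℕ) (hn : 1 < n) (a d β : ℕ → ℝ)
    (ha : ∀ k ∈ Finset.Icc 1 n, 0 < a k)
    (hsum : ∑ k ∈ Finset.Icc 1 n, a k = 1)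
    (khat : ℕ) (hk : khat ∈ Finset.Icc 1 n)
    (hd0 : ∀ k ∈ Finset.Icc 1 n, k ≠ khat → d k = 0)
    (f : ℝ → ℝ)
    (hfix : f =ᵐ[volume.restrict (Set.Icc (0:ℝ) 1)] simOp n a d β f)
    (xhat : ℝ) (hxhat : xhat = alphaOf a khat / (1 - a khat)) :
    ∃ g : ℝ → ℝ,
      f =ᵐ[volume.restrict (Set.Icc (0:ℝ) 1)] g ∧
      (g '' Set.Icc (0:ℝ) 1).Countable ∧
      (∃ 𝒥 : Set (Set ℝ), 𝒥.Countable ∧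
        (∀ I ∈ 𝒥, I.OrdConnected) ∧
        ⋃₀ 𝒥 = Set.Icc (0:ℝ) 1 \ {xhat} ∧
        (∀ I ∈ 𝒥, ∀ x ∈ I, ∀ y ∈ I, g x = g y)) ∧
      (∀ x ∈ Set.Icc (0:ℝ) 1, x ≠ xhat →
        (∃ L : ℝ, Filter.Tendsto g (nhdsWithin x (Set.Icc (0:ℝ) 1 ∩ Set.Iio x)) (nhds L)) ∧
        (∃ L : ℝ, Filter.Tendsto g (nhdsWithin x (Set.Icc (0:ℝ) 1 ∩ Set.Ioi x)) (nhds L))) ∧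
      {x ∈ Set.Icc (0:ℝ) 1 | ¬ ContinuousWithinAt g (Set.Icc (0:ℝ) 1) x}.Countable := by
  subst hxhat
  have hak : a khat < 1 := lt_one_of_sum_eq_one hn ha hsum hk
  have hcell := cell_eq_Ioo (ha khat hk)
  refine exists_ae_eq_stepFunction zero_lt_one
    (l := fun i : ℕ × (Finset.Icc 1 n).erase khat => (branch a khat)^[i.1] (alphaOf a i.2))
    (r := fun i => (branch a khat)^[i.1] (alphaOf a (i.2 + 1)))
    (c := fun i => (fun y => β khat + d khat * y)^[i.1] (β i.2)) ?_ ?_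
    (fun x hx hxk => exists_mem_Ioc_iterate_branch ha hsum hk hak hx hxk)
    (fun x hx hxk => exists_mem_Ico_iterate_branch ha hsum hk hak hx hxk) ?_
  · simpa only [← hcell] using pairwise_disjoint_cell ha hsum hk
  · exact fun i => hcell i.1 i.2 ▸ cell_subset_Icc_diff ha hsum hk hak i.2.2 i.1
  · exact fun i => hcell i.1 i.2 ▸
      ae_eq_iterate_of_mem_cell ha hsum hk hd0 (ae_imp_of_ae_restrict hfix) i.2.2 i.1

/-- a self-similar function of zero spectral order agrees a.e. with a
piecewise-constant function `g` taking at most countably many values, constant on each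
member of a countable family of intervals covering `[0,1] ∖ {x̂}`, having finite one-sided
limits at every `x ≠ x̂` (so all discontinuities except possibly `x̂` are jumps), and whose
set of discontinuity points is at most countable. -/
theorem selfSimilar_zeroOrder_structure
    (n : ℕ) (hn : 1 < n) (a d β : ℕ → ℝ)
    (ha : ∀ k ∈ Finset.Icc 1 n, 0 < a k)
    (hsum : ∑ k ∈ Finset.Icc 1 n, a k = 1)
    (p : ℝ≥0∞) (hp1 : 1 ≤ p) (hpt : p ≠ ⊤)
    (khat : ℕ) (hk : khat ∈ Finset.Icc 1 n)
    (hdk : d khat ≠ 0)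
    (hd0 : ∀ k ∈ Finset.Icc 1 n, k ≠ khat → d k = 0)
    (hβ : ∃ k ∈ Finset.Icc 1 n, β k ≠ 0)
    (hcontr : a khat * |d khat| ^ p.toReal < 1)
    (f : ℝ → ℝ) (hf : MemLp f p (volume.restrict (Set.Icc (0:ℝ) 1)))
    (hfix : f =ᵐ[volume.restrict (Set.Icc (0:ℝ) 1)] simOp n a d β f)
    (xhat : ℝ) (hxhat : xhat = alphaOf a khat / (1 - a khat)) :
    ∃ g : ℝ → ℝ,
      f =ᵐ[volume.restrict (Set.Icc (0:ℝ) 1)] g ∧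
      (g '' Set.Icc (0:ℝ) 1).Countable ∧
      (∃ 𝒥 : Set (Set ℝ), 𝒥.Countable ∧
        (∀ I ∈ 𝒥, I.OrdConnected) ∧
        ⋃₀ 𝒥 = Set.Icc (0:ℝ) 1 \ {xhat} ∧
        (∀ I ∈ 𝒥, ∀ x ∈ I, ∀ y ∈ I, g x = g y)) ∧
      (∀ x ∈ Set.Icc (0:ℝ) 1, x ≠ xhat →
        (∃ L : ℝ, Filter.Tendsto g (nhdsWithin x (Set.Icc (0:ℝ) 1 ∩ Set.Iio x)) (nhds L)) ∧
        (∃ L : ℝ, Filter.Tendsto g (nhdsWithin x (Set.Icc (0:ℝ) 1 ∩ Set.Ioi x)) (nhds L))) ∧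
      {x ∈ Set.Icc (0:ℝ) 1 | ¬ ContinuousWithinAt g (Set.Icc (0:ℝ) 1) x}.Countable :=
  selfSimilar_zeroOrder_structure_general n hn a d β ha hsum khat hk hd0 f hfix xhat hxhat
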